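/- arXiv:1109.3403 — 3 statements merged into one kernel-verified Lean document; each statement's English description precedes it below -/
import Mathlib

section
/- In the DaC model on Z^2, for any fixed p < 1/2 (the bond percolation critical value of Z^2) and any event A ⊂ {0,1}^{Z^2} depending on the colors of finitely many vertices, the probability μ_{p,r}^{Z^2}(A) is a polynomial in r. -/
open MeasureTheory Filter Set

attribute [local instance] Classical.propDecidable

structure Multigraph where
  V : Type
  E : Type
  ends : E → V × V

namespace Multigraph
variable (G : Multigraph)

/-- The edge `e` is incident to the vertex `v`. -/
def Inc (e : G.E) (v : G.V) : Prop := (G.ends e).1 = v ∨ (G.ends e).2 = v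

/-- The degree of a vertex: number of incident edges, counted with multiplicity. -/
noncomputable def degree (v : G.V) : ℕ := Nat.card {e : G.E // G.Inc e v}

/-- Adjacency of vertices. -/
def Adj (x y : G.V) : Prop := ∃ e, G.ends e = (x, y) ∨ G.ends e = (y, x)

/-- Connectivity through open edges of the bond configuration `η`. -/
def OpenConn (η : G.E → Bool) : G.V → G.V → Prop :=
  Relation.ReflTransGen (fun x y => ∃ e, η e = true ∧ (G.ends e = (x, y) ∨ G.ends e = (y, x)))

/-- The (vertex set of the) bond cluster of `v`. -/
def cluster (η : G.E → Bool) (v : G.V) : Set G.V := {w | G.OpenConn η v w}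

/-- `x` and `y` lie in the same black cluster of the site configuration `ξ`. -/
def BlackConn (ξ : G.V → Bool) (x y : G.V) : Prop :=
  ξ x = true ∧ Relation.ReflTransGen (fun u w => G.Adj u w ∧ ξ w = true) x y

/-- The event that some black cluster is infinite. -/
def InfiniteBlack : Set (G.V → Bool) := {ξ | ∃ v, {w | G.BlackConn ξ v w}.Infinite}

/-- The minimal vertex (w.r.t. the enumeration `idx`) of the bond cluster of `v`. -/
noncomputable def rep (idx : G.V → ℕ) (η : G.E → Bool) (v : G.V) : G.V :=
  haveI : Nonempty G.V := ⟨v⟩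
  Function.invFun idx (sInf (idx '' G.cluster η v))

/-- The site configuration obtained by giving each bond cluster the color of
its minimal vertex. -/
noncomputable def color (idx : G.V → ℕ) (η : G.E → Bool) (κ : G.V → Bool) : G.V → Bool :=
  fun v => κ (G.rep idx η v)

end Multigraph

/-- `ν` is the Bernoulli(`p`) product measure on `S → Bool`. -/
def IsBernoulli {S : Type} (p : ℝ) (ν : Measure (S → Bool)) : Prop :=
  IsProbabilityMeasure ν ∧ ∀ (s : Finset S) (f : S → Bool),
    ν {ω | ∀ i ∈ s, ω i = f i} = ∏ i ∈ s, ENNReal.ofReal (if f i then p else 1 - p)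

/-- `μ p r` is the divide-and-color measure built from the Bernoulli bond measures
`νE p` and the Bernoulli coloring measures `νV r`, clusters being colored by the
color of their `idx`-minimal vertex. -/
def IsDaC (G : Multigraph) (idx : G.V → ℕ)
    (νE : ℝ → Measure (G.E → Bool)) (νV : ℝ → Measure (G.V → Bool))
    (μ : ℝ → ℝ → Measure (G.V → Bool)) : Prop :=
  (∀ p ∈ Set.Icc (0:ℝ) 1, IsBernoulli p (νE p)) ∧
  (∀ r ∈ Set.Icc (0:ℝ) 1, IsBernoulli r (νV r)) ∧
  (∀ p r, μ p r = ((νE p).prod (νV r)).map (fun ω => G.color idx ω.1 ω.2))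

/-- `rc` is the critical coloring value function of the family of measures `μ`. -/
def IsCriticalColoring (G : Multigraph) (μ : ℝ → ℝ → Measure (G.V → Bool)) (rc : ℝ → ℝ) : Prop :=
  ∀ p ∈ Set.Icc (0:ℝ) 1, rc p ∈ Set.Icc (0:ℝ) 1 ∧
    (∀ r ∈ Set.Icc (0:ℝ) 1, r < rc p → μ p r G.InfiniteBlack = 0) ∧
    (∀ r ∈ Set.Icc (0:ℝ) 1, rc p < r → 0 < μ p r G.InfiniteBlack)

/-- `pc` is the critical point of Bernoulli bond percolation `νE`. -/
def IsBondCritical (G : Multigraph) (νE : ℝ → Measure (G.E → Bool)) (pc : ℝ) : Prop :=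
  pc ∈ Set.Icc (0:ℝ) 1 ∧
  ∀ p ∈ Set.Icc (0:ℝ) 1,
    (p < pc → νE p {η | ∃ v, (G.cluster η v).Infinite} = 0) ∧
    (pc < p → 0 < νE p {η | ∃ v, (G.cluster η v).Infinite})



/-- The square lattice `Z²`: vertices are points of `ℤ × ℤ`, and each vertex carries
two edges, one to its right neighbor and one to its top neighbor. -/
abbrev Z2 : Multigraph where
  V := ℤ × ℤ
  E := (ℤ × ℤ) × Bool
  ends := fun e => (e.1, if e.2 then (e.1.1 + 1, e.1.2) else (e.1.1, e.1.2 + 1))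
/-! Once the bonds `η` are fixed, the colours on the finite set `s` are the Bernoulli colours `κ`
read through the cluster-minimum map `v ↦ rep η v`. Their law depends on `η` only through the
partition of `s` into bond clusters: each class gets one independent Bernoulli(`r`) colour, so
the conditional probability of the event is a polynomial in `r`. A finite set has finitely many
partitions, hence integrating over `η` gives a finite linear combination of these polynomials whose
coefficients, the probabilities of the partitions, do not depend on `r`. -/

open Polynomial

instance Setoid.instFinite {α : Type*} [Finite α] : Finite (Setoid α) :=
  Finite.of_injective (fun K : Setoid α => K.r) fun _ _ h =>
    Setoid.ext fun a b => iff_of_eq (congrFun₂ h a b)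

noncomputable instance Setoid.instFintype {α : Type*} [Finite α] : Fintype (Setoid α) :=
  Fintype.ofFinite _

theorem Finset.restrict_preimage_restrict_image {ι β : Type*} {s : Finset ι} {A : Set (ι → β)}
    (hA : ∀ ξ ξ', (∀ v ∈ s, ξ v = ξ' v) → (ξ ∈ A ↔ ξ' ∈ A)) :
    s.restrict ⁻¹' (s.restrict '' A) = A :=
  subset_antisymm
    (fun ξ ⟨ξ', hξ', heq⟩ => (hA ξ ξ' fun v hv => (congrFun heq ⟨v, hv⟩).symm).mpr hξ')
    (Set.subset_preimage_image _ _)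

theorem lintegral_comp_eq_sum_measure_fiber {Ω α : Type*} [MeasurableSpace Ω] [Fintype α]
    {μ : Measure Ω} {K : Ω → α} (hK : ∀ a, MeasurableSet {ω | K ω = a}) (f : α → ENNReal) :
    ∫⁻ ω, f (K ω) ∂μ = ∑ a, μ {ω | K ω = a} * f a := by
  have hsum : (fun ω => f (K ω)) = fun ω => ∑ a, {ω | K ω = a}.indicator (fun _ => f a) ω := by
    funext ω
    simp [Set.indicator_apply]
  rw [hsum, lintegral_finsetSum _ fun a _ => measurable_const.indicator (hK a)]
  simp [lintegral_indicator_const (hK _), mul_comm]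

theorem measurableSet_setOf_reflTransGen {Ω α : Type*} [MeasurableSpace Ω] [Countable α]
    {R : Ω → α → α → Prop} (hR : ∀ x y, MeasurableSet {ω | R ω x y}) (v w : α) :
    MeasurableSet {ω | Relation.ReflTransGen (R ω) v w} := by
  have hchain : ∀ (l : List α) x, MeasurableSet {ω | List.IsChain (R ω) (x :: l)} := by
    intro l
    induction l with
    | nil => simp
    | cons y l ih =>
      simpa [List.isChain_cons_cons, Set.ofPred_and] using fun x => (hR x y).inter (ih y)
  have hpaths : {ω | Relation.ReflTransGen (R ω) v w}
      = ⋃ l : List α,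
          {ω | List.IsChain (R ω) (v :: l)} ∩ {_ω | (v :: l).getLast (by simp) = w} := by
    ext ω
    simp only [Set.mem_ofPred_eq, Set.mem_iUnion, Set.mem_inter_iff]
    exact ⟨List.exists_isChain_cons_of_relationReflTransGen,
      fun ⟨l, hl, hlast⟩ => List.relationReflTransGen_of_exists_isChain_cons l hl hlast⟩
  rw [hpaths]
  exact .iUnion fun l => (hchain l v).inter (.const _)

section Bernoulli

variable {S : Type} {r : ℝ} {ν : Measure (S → Bool)} {ι : Type*} [Fintype ι]

theorem IsBernoulli.measure_comp_eq (hν : IsBernoulli r ν) {j : ι → S} (hj : Function.Injective j)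
    (g : ι → Bool) :
    ν {κ | κ ∘ j = g} = ∏ i, ENNReal.ofReal (if g i then r else 1 - r) := by
  have hcyl : {κ : S → Bool | κ ∘ j = g}
      = {κ | ∀ x ∈ Finset.univ.image j, κ x = Function.extend j g default x} := by
    ext κ
    simp [funext_iff, hj.extend_apply]
  rw [hcyl, hν.2, Finset.prod_image hj.injOn]
  simp [hj.extend_apply]

theorem IsBernoulli.measure_comp_mem (hν : IsBernoulli r ν) {j : ι → S} (hj : Function.Injective j)
    (C : Set (ι → Bool)) :
    ν {κ | κ ∘ j ∈ C} = ∑ g with g ∈ C, ∏ i, ENNReal.ofReal (if g i then r else 1 - r) := by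
  have hj_meas : Measurable fun κ : S → Bool => κ ∘ j :=
    measurable_pi_lambda _ fun i => measurable_pi_apply (j i)
  calc ν {κ | κ ∘ j ∈ C}
      = ν ((· ∘ j) ⁻¹' ↑(Finset.univ.filter (· ∈ C))) := by simp [Set.preimage]
    _ = ∑ g with g ∈ C, ν ((· ∘ j) ⁻¹' {g}) :=
      (sum_measure_preimage_singleton _ fun g _ => hj_meas (measurableSet_singleton g)).symm
    _ = _ := Finset.sum_congr rfl fun g _ => hν.measure_comp_eq hj g

/-- Probability that a Bernoulli(`r`) colouring which is constant on the classes of `K`, and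
independent across classes, lies in `B`. -/
noncomputable def cylinderPoly (K : Setoid ι) (B : Set (ι → Bool)) : ℝ[X] :=
  ∑ g : Quotient K → Bool with g ∘ Quotient.mk K ∈ B, ∏ x, if g x then X else 1 - X

theorem eval_cylinderPoly (K : Setoid ι) (B : Set (ι → Bool)) (r : ℝ) :
    (cylinderPoly K B).eval r
      = ∑ g : Quotient K → Bool with g ∘ Quotient.mk K ∈ B, ∏ x, if g x then r else 1 - r := by
  simp [cylinderPoly, eval_finsetSum, eval_prod, apply_ite]

theorem eval_cylinderPoly_nonneg (K : Setoid ι) (B : Set (ι → Bool)) (hr : r ∈ Icc 0 1) :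
    0 ≤ (cylinderPoly K B).eval r := by
  rw [eval_cylinderPoly]
  exact Finset.sum_nonneg fun g _ => Finset.prod_nonneg fun x _ => by
    split_ifs <;> linarith [hr.1, hr.2]

theorem IsBernoulli.measure_comp_mem_eq_ofReal_eval (hν : IsBernoulli r ν) (hr : r ∈ Icc 0 1)
    (m : ι → S) (B : Set (ι → Bool)) :
    ν {κ | κ ∘ m ∈ B} = ENNReal.ofReal ((cylinderPoly (Setoid.ker m) B).eval r) := by
  have hweight : ∀ b : Bool, 0 ≤ if b then r else 1 - r := fun b => by
    split_ifs <;> linarith [hr.1, hr.2]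
  change ν {κ | κ ∘ Setoid.kerLift m ∈ {g | g ∘ Quotient.mk _ ∈ B}} = _
  rw [hν.measure_comp_mem (Setoid.kerLift_injective m), eval_cylinderPoly,
    ENNReal.ofReal_sum_of_nonneg fun g _ => Finset.prod_nonneg fun x _ => hweight (g x)]
  -- the two index finsets differ only in their `DecidableEq` instances
  refine Finset.sum_congr (by congr!) fun g _ => ?_
  rw [ENNReal.ofReal_prod_of_nonneg fun x _ => hweight (g x)]

end Bernoulli

namespace Multigraph

variable {G : Multigraph} {idx : G.V → ℕ}

theorem rep_mem_cluster_and_le (hidx : Function.Injective idx) (η : G.E → Bool) (v : G.V) :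
    G.rep idx η v ∈ G.cluster η v ∧ ∀ x ∈ G.cluster η v, idx (G.rep idx η v) ≤ idx x := by
  have hne : (idx '' G.cluster η v).Nonempty := ⟨idx v, v, Relation.ReflTransGen.refl, rfl⟩
  obtain ⟨u, hu, hu_idx⟩ := Nat.sInf_mem hne
  have : Nonempty G.V := ⟨v⟩
  have hrep : G.rep idx η v = u := by
    change Function.invFun idx (sInf (idx '' G.cluster η v)) = u
    rw [← hu_idx, Function.leftInverse_invFun hidx]
  rw [hrep]
  exact ⟨hu, fun x hx => hu_idx ▸ Nat.sInf_le ⟨x, hx, rfl⟩⟩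

theorem rep_eq_iff (hidx : Function.Injective idx) (η : G.E → Bool) (v u : G.V) :
    G.rep idx η v = u ↔ u ∈ G.cluster η v ∧ ∀ x ∈ G.cluster η v, idx u ≤ idx x := by
  obtain ⟨hrep, hrep_le⟩ := rep_mem_cluster_and_le hidx η v
  refine ⟨fun h => h ▸ ⟨hrep, hrep_le⟩, fun ⟨hu, hu_le⟩ => ?_⟩
  exact hidx (le_antisymm (hrep_le u hu) (hu_le _ hrep))

noncomputable def clusterPartition (idx : G.V → ℕ) (η : G.E → Bool) (s : Finset G.V) : Setoid s :=
  Setoid.ker fun a : s => G.rep idx η a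

variable [Countable G.V] [Countable G.E]

theorem measurableSet_openConn (v w : G.V) :
    MeasurableSet {η : G.E → Bool | G.OpenConn η v w} := by
  refine measurableSet_setOf_reflTransGen (fun x y => ?_) v w
  have hopen : ∀ e, MeasurableSet ((fun η : G.E → Bool => η e) ⁻¹' {true}) := fun e =>
    measurable_pi_apply e (measurableSet_singleton true)
  simp only [Set.ofPred_exists, Set.ofPred_and]
  exact .iUnion fun e => (hopen e).inter (.const _)

theorem measurableSet_rep_eq (hidx : Function.Injective idx) (v u : G.V) :
    MeasurableSet {η : G.E → Bool | G.rep idx η v = u} := by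
  simp only [rep_eq_iff hidx, cluster, Set.mem_ofPred_eq, Set.ofPred_and, Set.ofPred_forall]
  exact (measurableSet_openConn v u).inter
    (.iInter fun x => (measurableSet_openConn v x).imp (.const _))

theorem measurableSet_rep_eq_rep (hidx : Function.Injective idx) (v w : G.V) :
    MeasurableSet {η : G.E → Bool | G.rep idx η v = G.rep idx η w} := by
  have hunion : {η : G.E → Bool | G.rep idx η v = G.rep idx η w}
      = ⋃ u, {η | G.rep idx η v = u} ∩ {η | G.rep idx η w = u} := by
    ext η
    simp [eq_comm (b := G.rep idx η w)]
  rw [hunion]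
  exact .iUnion fun u => (measurableSet_rep_eq hidx v u).inter (measurableSet_rep_eq hidx w u)

theorem measurable_color (hidx : Function.Injective idx) :
    Measurable fun ω : (G.E → Bool) × (G.V → Bool) => G.color idx ω.1 ω.2 := by
  refine measurable_pi_lambda _ fun v => measurable_to_countable' fun c => ?_
  have hunion : (fun ω : (G.E → Bool) × (G.V → Bool) => ω.2 (G.rep idx ω.1 v)) ⁻¹' {c}
      = ⋃ u, Prod.fst ⁻¹' {η | G.rep idx η v = u}
          ∩ (fun ω : (G.E → Bool) × (G.V → Bool) => ω.2 u) ⁻¹' {c} := by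
    ext ω
    simp
  change MeasurableSet ((fun ω : (G.E → Bool) × (G.V → Bool) => ω.2 (G.rep idx ω.1 v)) ⁻¹' {c})
  rw [hunion]
  exact .iUnion fun u => (measurable_fst (measurableSet_rep_eq hidx v u)).inter
    ((measurable_pi_apply u).comp measurable_snd (measurableSet_singleton c))

theorem measurableSet_clusterPartition_eq (hidx : Function.Injective idx) (s : Finset G.V)
    (K : Setoid s) : MeasurableSet {η | G.clusterPartition idx η s = K} := by
  have hinter : {η | G.clusterPartition idx η s = K}
      = ⋂ (a : s) (b : s), {η | G.rep idx η a = G.rep idx η b ↔ K a b} := by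
    ext η
    simp [Setoid.ext_iff, clusterPartition, Setoid.ker]
  rw [hinter]
  exact .iInter fun a => .iInter fun b => (measurableSet_rep_eq_rep hidx a b).iff (.const _)

end Multigraph

theorem IsDaC.measure_restrict_preimage {G : Multigraph} [Countable G.V] [Countable G.E]
    {idx : G.V → ℕ} {νE : ℝ → Measure (G.E → Bool)} {νV : ℝ → Measure (G.V → Bool)}
    {μ : ℝ → ℝ → Measure (G.V → Bool)} (hDaC : IsDaC G idx νE νV μ)
    (hidx : Function.Injective idx) (p : ℝ) {r : ℝ} (hr : r ∈ Icc 0 1) (s : Finset G.V)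
    (B : Set (s → Bool)) :
    μ p r (s.restrict ⁻¹' B) = ∑ K : Setoid s,
      νE p {η | G.clusterPartition idx η s = K} * ENNReal.ofReal ((cylinderPoly K B).eval r) := by
  obtain ⟨-, hV, hμ⟩ := hDaC
  have := (hV r hr).1
  have hB : MeasurableSet (s.restrict ⁻¹' B) :=
    Finset.measurable_restrict (X := fun _ : G.V => Bool) s B.to_countable.measurableSet
  rw [hμ, Measure.map_apply (Multigraph.measurable_color hidx) hB,
    Measure.prod_apply (Multigraph.measurable_color hidx hB),
    ← lintegral_comp_eq_sum_measure_fiber (Multigraph.measurableSet_clusterPartition_eq hidx s)]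
  exact lintegral_congr fun η =>
    (hV r hr).measure_comp_mem_eq_ofReal_eval hr (fun a : s => G.rep idx η a) B

/-- For fixed `p < 1/2`, the DaC probability on `Z²` of an event depending on the
colors of finitely many vertices is a polynomial in `r`. -/
theorem dac_Z2_cylinder_polynomial_in_r
    (idx : Z2.V → ℕ) (hidx : Function.Injective idx)
    (νE : ℝ → Measure (Z2.E → Bool)) (νV : ℝ → Measure (Z2.V → Bool))
    (μ : ℝ → ℝ → Measure (Z2.V → Bool)) (hDaC : IsDaC Z2 idx νE νV μ)
    (p : ℝ) (hp : p ∈ Set.Ico (0:ℝ) (1/2))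
    (A : Set (Z2.V → Bool))
    (hA : ∃ s : Finset Z2.V, ∀ ξ ξ' : Z2.V → Bool,
      (∀ v ∈ s, ξ v = ξ' v) → (ξ ∈ A ↔ ξ' ∈ A)) :
    ∃ Q : Polynomial ℝ, ∀ r ∈ Set.Icc (0:ℝ) 1, (μ p r A).toReal = Q.eval r := by
  obtain ⟨s, hs⟩ := hA
  obtain ⟨B, rfl⟩ : ∃ B, A = s.restrict ⁻¹' B :=
    ⟨_, (Finset.restrict_preimage_restrict_image hs).symm⟩
  have := (hDaC.1 p ⟨hp.1, by linarith [hp.2]⟩).1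
  refine ⟨∑ K : Setoid s, C (νE p {η | Z2.clusterPartition idx η s = K}).toReal *
    cylinderPoly K B, fun r hr => ?_⟩
  rw [hDaC.measure_restrict_preimage hidx p hr,
    ENNReal.toReal_sum fun K _ => ENNReal.mul_ne_top (measure_ne_top _ _) ENNReal.ofReal_ne_top,
    eval_finsetSum]
  refine Finset.sum_congr rfl fun K _ => ?_
  rw [ENNReal.toReal_mul, ENNReal.toReal_ofReal (eval_cylinderPoly_nonneg K B hr), eval_mul,
    eval_C]
end

section
/- Let (D_n, a_n, b_n) be finite connected graphs with marked vertices and Γ_D the tree-like graph obtained from the rooted 3-regular tree T_3 by replacing each edge at level n by a copy of D_n (identifying the endpoint nearer the root with a_n and the other with b_n). Let h^{D_n}(p) be the ν_p-probability that a_n and b_n lie in the same bond cluster of D_n. If limsup_{n→∞} h^{D_n}(p) < 1/2, then p ≤ p_c^{Γ_D}; if liminf_{n→∞} h^{D_n}(p) > 1/2, then p ≥ p_c^{Γ_D}. -/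
open MeasureTheory Filter Set

attribute [local instance] Classical.propDecidable

/-- Probability of the event `A` under Bernoulli(`p`) bond percolation on a finite
edge set. -/
noncomputable def bprob {E : Type} [Fintype E] [DecidableEq E] (p : ℝ) (A : Set (E → Bool)) : ℝ :=
  ∑ η : E → Bool, if η ∈ A then ∏ e : E, (if η e then p else 1 - p) else 0

namespace Multigraph

/-- The minimal vertex of the bond cluster of `v` (finite graphs). -/
noncomputable def minRep (D : Multigraph) [Fintype D.V] [LinearOrder D.V]
    (η : D.E → Bool) (v : D.V) : D.V :=
  ((Set.toFinite (D.cluster η v)).toFinset).min'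
    (by rw [Set.Finite.toFinset_nonempty]; exact ⟨v, Relation.ReflTransGen.refl⟩)

/-- Probability of an event `A` (depending on the bond configuration and the induced
coloring) in the divide-and-color model on a finite graph `D`. -/
noncomputable def dacProb (D : Multigraph) [Fintype D.E] [DecidableEq D.E]
    [Fintype D.V] [LinearOrder D.V] (p r : ℝ)
    (A : Set ((D.E → Bool) × (D.V → Bool))) : ℝ :=
  ∑ η : D.E → Bool, ∑ κ : D.V → Bool,
    ((∏ e : D.E, if η e then p else 1 - p) * (∏ v : D.V, if κ v then r else 1 - r)) *
      (if (η, fun v => κ (D.minRep η v)) ∈ A then 1 else 0)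

/-- The event `E_{a,b}`: the bond cluster of `a` is pivotal for the existence of a
black path from `a` to `b`; that is, either `a` and `b` are in the same bond cluster,
or they are in different bond clusters but some vertex at distance 1 from the cluster
of `a` is connected to `b` by a black path. -/
def PivEvent (D : Multigraph) (a b : D.V) : Set ((D.E → Bool) × (D.V → Bool)) :=
  {ω | D.OpenConn ω.1 a b ∨
    (¬ D.OpenConn ω.1 a b ∧ ∃ v, v ∉ D.cluster ω.1 a ∧
      (∃ u ∈ D.cluster ω.1 a, D.Adj u v) ∧ D.BlackConn ω.2 v b)}

/-- `h^D(p)`: probability that `a` and `b` are in the same bond cluster. -/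
noncomputable def hprob (D : Multigraph) [Fintype D.E] [DecidableEq D.E]
    (a b : D.V) (p : ℝ) : ℝ :=
  bprob p {η | D.OpenConn η a b}

/-- `f^D(p,r)`: DaC probability of the pivotality event `E_{a,b}`. -/
noncomputable def fprob (D : Multigraph) [Fintype D.E] [DecidableEq D.E]
    [Fintype D.V] [LinearOrder D.V] (a b : D.V) (p r : ℝ) : ℝ :=
  D.dacProb p r (D.PivEvent a b)

end Multigraph

/-! ### The rooted 3-regular tree and the tree-like substitution construction -/

/-- Vertices of the rooted 3-regular tree `T₃`: the root is `none`; any other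
vertex is reached by first choosing one of the 3 subtrees of the root and then
following a binary path. -/
abbrev V3 : Type := Option (Fin 3 × List (Fin 2))

/-- Edges of `T₃`, indexed by their endpoint `s e` farther from the root. -/
abbrev E3 : Type := Fin 3 × List (Fin 2)

/-- The level of the edge `e`, i.e. the distance from `s e` to the root. -/
def levelE (e : E3) : ℕ := e.2.length + 1

/-- The endpoint of the edge `e` closer to the root (`f(e)`). -/
def parentV (e : E3) : V3 := if e.2 = [] then none else some (e.1, e.2.dropLast)

/-- Adjacency in the tree `T₃`. -/
def T3Adj (x y : V3) : Prop :=
  ∃ e : E3, (x = parentV e ∧ y = some e) ∨ (y = parentV e ∧ x = some e)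

/-- The vertices of `D` other than the two marked ones. -/
def interiorV (D : Multigraph) (a b : D.V) : Type := {v : D.V // v ≠ a ∧ v ≠ b}

/-- Embedding of the vertex set of the copy of `D (levelE e)` replacing the tree
edge `e` into the vertex set of the tree-like graph `Γ_D`: the marked vertex `a`
goes to the endpoint of `e` closer to the root, `b` to the farther endpoint, and the
other vertices to fresh interior vertices. -/
noncomputable def embedV (D : ℕ → Multigraph) (a b : ∀ n, (D n).V) (e : E3)
    (v : (D (levelE e)).V) :
    V3 ⊕ Σ e' : E3, interiorV (D (levelE e')) (a (levelE e')) (b (levelE e')) :=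
  if h : v = a (levelE e) then Sum.inl (parentV e)
  else if h' : v = b (levelE e) then Sum.inl (some e)
  else Sum.inr ⟨e, ⟨v, h, h'⟩⟩

/-- The tree-like graph `Γ_D` obtained from the rooted 3-regular tree by replacing
every edge at level `n` by a copy of `D n`, the endpoint nearer the root being
identified with `a n` and the other one with `b n`. -/
@[reducible] noncomputable def GammaD (D : ℕ → Multigraph) (a b : ∀ n, (D n).V) : Multigraph where
  V := V3 ⊕ Σ e : E3, interiorV (D (levelE e)) (a (levelE e)) (b (levelE e))
  E := Σ e : E3, (D (levelE e)).E
  ends := fun ed =>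
    (embedV D a b ed.1 ((D (levelE ed.1)).ends ed.2).1,
     embedV D a b ed.1 ((D (levelE ed.1)).ends ed.2).2)

/-- The copy of the root `ρ` in `Γ_D`. -/
noncomputable def rootV (D : ℕ → Multigraph) (a b : ∀ n, (D n).V) : (GammaD D a b).V :=
  Sum.inl none

/-!
The copy of a tree edge at level `n` connects its marked vertices with probability `h^{D_n}(p)`,
independently over tree edges, and unless it does, no open path of `Γ_D` passes from one side of
that tree edge to the other. So `Γ_D` has an infinite cluster iff, below some deep tree edge, the
inhomogeneous tree percolation with parameters `h^{D_n}(p)` has open descending paths of every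
length. If eventually `h ≤ q < 1/2`, a union bound over the two children bounds the probability of
a descent of length `L` by `(2q)^L`. If eventually `h ≥ q > 1/2`, the two branches below an edge
are independent, so this probability obeys the recursion `y ↦ 1 - (1 - q y)²` and stays above its
positive fixed point.
-/

section Bernoulli

open Function

variable {E : Type} {p : ℝ} {ν : Measure (E → Bool)}

lemma bernoulli_ite_nonneg (hp : p ∈ Icc (0:ℝ) 1) (b : Bool) :
    0 ≤ if b then p else 1 - p := by
  cases b <;> simp [hp.1, hp.2]

lemma bprob_nonneg {E₀ : Type} [Fintype E₀] [DecidableEq E₀] (hp : p ∈ Icc (0:ℝ) 1)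
    (A : Set (E₀ → Bool)) : 0 ≤ bprob p A :=
  Finset.sum_nonneg fun _ _ => by
    split_ifs
    exacts [Finset.prod_nonneg fun _ _ => bernoulli_ite_nonneg hp _, le_rfl]

lemma bprob_le_one {E₀ : Type} [Fintype E₀] [DecidableEq E₀] (hp : p ∈ Icc (0:ℝ) 1)
    (A : Set (E₀ → Bool)) : bprob p A ≤ 1 := by
  calc bprob p A ≤ ∑ η : E₀ → Bool, ∏ e, if η e then p else 1 - p :=
        Finset.sum_le_sum fun η _ => by
          split_ifs
          exacts [le_rfl, Finset.prod_nonneg fun _ _ => bernoulli_ite_nonneg hp _]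
    _ = ∏ _e : E₀, ∑ b : Bool, if b then p else 1 - p := by rw [Fintype.prod_sum]
    _ = 1 := by simp

lemma bprob_sumElim {E₁ E₂ : Type} [Fintype E₁] [DecidableEq E₁] [Fintype E₂]
    [DecidableEq E₂] (A₁ : Set (E₁ → Bool)) (A₂ : Set (E₂ → Bool)) :
    bprob p {x : E₁ ⊕ E₂ → Bool | x ∘ Sum.inl ∈ A₁ ∧ x ∘ Sum.inr ∈ A₂} =
      bprob p A₁ * bprob p A₂ := by
  rw [bprob, bprob, bprob, Finset.sum_mul_sum, ← Fintype.sum_prod_type']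
  refine Fintype.sum_equiv (Equiv.sumArrowEquivProdArrow E₁ E₂ Bool) _ _ fun x => ?_
  dsimp only [Equiv.sumArrowEquivProdArrow, Equiv.coe_fn_mk]
  by_cases h₁ : x ∘ Sum.inl ∈ A₁ <;> by_cases h₂ : x ∘ Sum.inr ∈ A₂ <;>
    simp [Fintype.prod_sum_type, h₁, h₂]

lemma measurableSet_comp_mem {E₀ : Type} [Finite E₀] (φ : E₀ → E)
    (A₀ : Set (E₀ → Bool)) : MeasurableSet {ω : E → Bool | ω ∘ φ ∈ A₀} :=
  have : Countable E₀ := Finite.to_countable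
  measurable_pi_lambda _ (fun d => measurable_pi_apply (φ d)) (Set.toFinite A₀).measurableSet

lemma IsBernoulli.measure_comp_mem_s9 (hν : IsBernoulli p ν) (hp : p ∈ Icc (0:ℝ) 1)
    {E₀ : Type} [Fintype E₀] [DecidableEq E₀] {φ : E₀ → E} (hφ : Injective φ)
    (A₀ : Set (E₀ → Bool)) :
    ν {ω | ω ∘ φ ∈ A₀} = ENNReal.ofReal (bprob p A₀) := by
  have hcyl : ∀ x : E₀ → Bool,
      ν {ω | ω ∘ φ ∈ ({x} : Set (E₀ → Bool))} =
        ENNReal.ofReal (∏ d, if x d then p else 1 - p) := by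
    intro x
    have hset : {ω : E → Bool | ω ∘ φ ∈ ({x} : Set (E₀ → Bool))} =
        {ω | ∀ i ∈ Finset.univ.map ⟨φ, hφ⟩, ω i = extend φ x (fun _ => false) i} := by
      ext ω
      simp [funext_iff, hφ.extend_apply]
    rw [hset, hν.2, Finset.prod_map,
      ENNReal.ofReal_prod_of_nonneg fun d _ => bernoulli_ite_nonneg hp _]
    simp [hφ.extend_apply]
  have hunion : {ω : E → Bool | ω ∘ φ ∈ A₀} =
      ⋃ x ∈ Finset.univ.filter (· ∈ A₀),
        {ω | ω ∘ φ ∈ ({x} : Set (E₀ → Bool))} := by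
    ext ω
    simp
  rw [hunion, measure_biUnion_finset, bprob, ← Finset.sum_filter,
    ENNReal.ofReal_sum_of_nonneg fun _ _ => Finset.prod_nonneg fun _ _ =>
      bernoulli_ite_nonneg hp _]
  · exact Finset.sum_congr rfl fun x _ => hcyl x
  · exact fun x _ y _ hxy => Set.disjoint_left.2 fun ω hx hy => hxy (hx.symm.trans hy)
  · exact fun x _ => measurableSet_comp_mem φ {x}

lemma DependsOn.exists_eq_comp_mem {s : Set E} {A : Set (E → Bool)}
    (hA : DependsOn (· ∈ A) s) : ∃ B : Set (s → Bool), A = {ω | ω ∘ (↑) ∈ B} := by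
  refine ⟨(· ∘ (↑)) '' A, Set.Subset.antisymm (fun ω hω => ⟨ω, hω, rfl⟩) ?_⟩
  rintro ω ⟨ω', hω', hrestr⟩
  exact (hA fun i hi => congrFun hrestr ⟨i, hi⟩).mp hω'

lemma DependsOn.measurableSet {S : Finset E} {A : Set (E → Bool)}
    (hA : DependsOn (· ∈ A) (S : Set E)) : MeasurableSet A := by
  obtain ⟨B, rfl⟩ := hA.exists_eq_comp_mem
  exact measurableSet_comp_mem _ B

lemma DependsOn.mem_inter {s₁ s₂ : Set E} {A₁ A₂ : Set (E → Bool)}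
    (h₁ : DependsOn (· ∈ A₁) s₁) (h₂ : DependsOn (· ∈ A₂) s₂) :
    DependsOn (· ∈ A₁ ∩ A₂) (s₁ ∪ s₂) := fun _ _ h =>
  congrArg₂ And (h₁ fun i hi => h i (Or.inl hi)) (h₂ fun i hi => h i (Or.inr hi))

lemma IsBernoulli.measure_inter (hν : IsBernoulli p ν) (hp : p ∈ Icc (0:ℝ) 1)
    {S₁ S₂ : Finset E} (hS : Disjoint S₁ S₂) {A₁ A₂ : Set (E → Bool)}
    (h₁ : DependsOn (· ∈ A₁) (S₁ : Set E))
    (h₂ : DependsOn (· ∈ A₂) (S₂ : Set E)) :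
    ν (A₁ ∩ A₂) = ν A₁ * ν A₂ := by
  obtain ⟨B₁, rfl⟩ := h₁.exists_eq_comp_mem
  obtain ⟨B₂, rfl⟩ := h₂.exists_eq_comp_mem
  have hφ : Injective (Sum.elim ((↑) : S₁ → E) ((↑) : S₂ → E)) :=
    Subtype.val_injective.sumElim Subtype.val_injective fun x y hxy =>
      Finset.disjoint_left.1 hS x.2 (hxy ▸ y.2)
  change ν {ω | ω ∘ Sum.elim ((↑) : S₁ → E) ((↑) : S₂ → E) ∈
    {x : S₁ ⊕ S₂ → Bool | x ∘ Sum.inl ∈ B₁ ∧ x ∘ Sum.inr ∈ B₂}} = _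
  rw [hν.measure_comp_mem_s9 hp hφ, bprob_sumElim, ENNReal.ofReal_mul (bprob_nonneg hp _),
    hν.measure_comp_mem_s9 hp Subtype.val_injective, hν.measure_comp_mem_s9 hp Subtype.val_injective]

lemma IsBernoulli.measureReal_inter (hν : IsBernoulli p ν) (hp : p ∈ Icc (0:ℝ) 1)
    {S₁ S₂ : Finset E} (hS : Disjoint S₁ S₂) {A₁ A₂ : Set (E → Bool)}
    (h₁ : DependsOn (· ∈ A₁) (S₁ : Set E))
    (h₂ : DependsOn (· ∈ A₂) (S₂ : Set E)) :
    ν.real (A₁ ∩ A₂) = ν.real A₁ * ν.real A₂ := by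
  simp only [Measure.real, hν.measure_inter hp hS h₁ h₂, ENNReal.toReal_mul]

end Bernoulli

lemma Set.Finite.exists_forall_mem_of_antitone {α β : Type} {F : Set α} (hF : F.Finite)
    {s : α → ℕ → Set β} (hs : ∀ a, Antitone (s a)) {x : β}
    (h : ∀ n, ∃ a ∈ F, x ∈ s a n) :
    ∃ a ∈ F, ∀ n, x ∈ s a n := by
  by_contra! hcon
  have hev : ∀ᶠ n in atTop, ∀ a ∈ F, x ∉ s a n :=
    (eventually_all_finite hF).2 fun a ha => by
      obtain ⟨n, hn⟩ := hcon a ha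
      exact eventually_atTop.2 ⟨n, fun m hm hx => hn (hs a hm hx)⟩
  obtain ⟨n, hn⟩ := hev.exists
  obtain ⟨a, ha, hx⟩ := h n
  exact hn a ha hx

section Tree

def BelowE (e e' : E3) : Prop := e.1 = e'.1 ∧ e.2 <+: e'.2

def BelowV (e : E3) : V3 → Prop
  | none => False
  | some e' => BelowE e e'

def levelV : V3 → ℕ
  | none => 0
  | some e => levelE e

def childE (e : E3) (j : Fin 2) : E3 := (e.1, e.2 ++ [j])

/-- The ancestor of `e` at level `n + 1`, provided `n ≤ e.2.length`. -/
def truncE (e : E3) (n : ℕ) : E3 := (e.1, e.2.take n)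

lemma BelowE.refl (e : E3) : BelowE e e := ⟨rfl, List.prefix_rfl⟩

lemma BelowE.trans {e e' e'' : E3} (h : BelowE e e') (h' : BelowE e' e'') : BelowE e e'' :=
  ⟨h.1.trans h'.1, h.2.trans h'.2⟩

lemma BelowE.levelE_le {e e' : E3} (h : BelowE e e') : levelE e ≤ levelE e' :=
  Nat.succ_le_succ h.2.length_le

lemma BelowV.levelE_le {e : E3} : ∀ {v : V3}, BelowV e v → levelE e ≤ levelV v
  | some _, h => BelowE.levelE_le h

lemma belowV_parentV_iff {e e' : E3} (hne : e ≠ e') : BelowV e (parentV e') ↔ BelowE e e' := by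
  unfold parentV
  split_ifs with h
  · refine iff_of_false id fun ⟨h1, h2⟩ => hne (Prod.ext h1 ?_)
    rw [h] at h2 ⊢
    exact List.prefix_nil.mp h2
  · refine ⟨fun ⟨h1, h2⟩ => ⟨h1, h2.trans (List.dropLast_prefix _)⟩,
      fun ⟨h1, h2⟩ => ⟨h1, ?_⟩⟩
    have hlt : e.2.length < e'.2.length := lt_of_le_of_ne h2.length_le
      fun hlen => hne (Prod.ext h1 (h2.eq_of_length hlen))
    rw [List.prefix_iff_eq_take] at h2 ⊢
    rw [List.dropLast_eq_take, List.take_take, min_eq_left (by omega)]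
    exact h2

lemma not_belowV_parentV_self (e : E3) : ¬ BelowV e (parentV e) := by
  unfold parentV
  split_ifs with h
  · exact id
  · rintro ⟨-, h2⟩
    have := h2.length_le
    rw [List.length_dropLast] at this
    exact h (List.length_eq_zero_iff.mp (by omega))

lemma levelE_childE (e : E3) (j : Fin 2) : levelE (childE e j) = levelE e + 1 := by
  simp [childE, levelE]

lemma parentV_childE (e : E3) (j : Fin 2) : parentV (childE e j) = some e := by
  simp [parentV, childE]

lemma belowE_childE (e : E3) (j : Fin 2) : BelowE e (childE e j) := ⟨rfl, ⟨[j], rfl⟩⟩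

lemma not_belowE_childE_zero_of_one {e e' : E3} (h₀ : BelowE (childE e 0) e')
    (h₁ : BelowE (childE e 1) e') : False := by
  have h₀ := List.prefix_iff_eq_take.1 h₀.2
  have h₁ := List.prefix_iff_eq_take.1 h₁.2
  simp only [childE, List.length_append, List.length_singleton] at h₀ h₁
  simpa using h₀.trans h₁.symm

lemma levelE_truncE {e : E3} {n : ℕ} (hn : n ≤ e.2.length) : levelE (truncE e n) = n + 1 := by
  simp [truncE, levelE, hn]

lemma belowE_truncE (e : E3) (n : ℕ) : BelowE (truncE e n) e := ⟨rfl, List.take_prefix _ _⟩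

lemma childE_truncE {e : E3} {n : ℕ} (hn : n < e.2.length) :
    childE (truncE e n) e.2[n] = truncE e (n + 1) := by
  simp only [childE, truncE, List.take_concat_get' _ _ hn]

lemma finite_setOf_levelE_le (N : ℕ) : {e : E3 | levelE e ≤ N}.Finite :=
  (Set.finite_univ.prod (List.finite_length_le (Fin 2) N)).subset
    fun _ he => ⟨Set.mem_univ _, Nat.le_of_succ_le he⟩

lemma finite_setOf_levelV_le (N : ℕ) : {v : V3 | levelV v ≤ N}.Finite :=
  ((finite_setOf_levelE_le N).image some).insert none |>.subset fun
    | none, _ => Set.mem_insert _ _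
    | some e, he => Set.mem_insert_of_mem _ ⟨e, he, rfl⟩

end Tree

section GammaD

variable {D : ℕ → Multigraph} {a b : ∀ n, (D n).V}

def CopyConn (D : ℕ → Multigraph) (a b : ∀ n, (D n).V) (ω : (GammaD D a b).E → Bool)
    (e : E3) : Prop :=
  (D (levelE e)).OpenConn (fun d => ω ⟨e, d⟩) (a (levelE e)) (b (levelE e))

lemma embedV_a (e : E3) : embedV D a b e (a (levelE e)) = Sum.inl (parentV e) := by
  simp [embedV]

lemma embedV_b (hab : ∀ n, a n ≠ b n) (e : E3) :
    embedV D a b e (b (levelE e)) = Sum.inl (some e) := by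
  simp [embedV, (hab _).symm]

lemma openConn_embedV {ω : (GammaD D a b).E → Bool} {e : E3} {x y : (D (levelE e)).V}
    (h : (D (levelE e)).OpenConn (fun d => ω ⟨e, d⟩) x y) :
    (GammaD D a b).OpenConn ω (embedV D a b e x) (embedV D a b e y) :=
  h.lift _ fun _ _ ⟨d, hd, hends⟩ =>
    ⟨⟨e, d⟩, hd, hends.imp (fun h => by simp [h]) (fun h => by simp [h])⟩

lemma CopyConn.openConn (hab : ∀ n, a n ≠ b n) {ω : (GammaD D a b).E → Bool} {e : E3}
    (h : CopyConn D a b ω e) :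
    (GammaD D a b).OpenConn ω (Sum.inl (parentV e)) (Sum.inl (some e)) := by
  simpa only [embedV_a, embedV_b hab] using openConn_embedV h

/-- The side of the copy of `e` away from the root: the subtree below `e` together with the
vertices of the copy that are open-connected to `b` inside it. Unless the copy of `e` connects
its marked vertices, no open edge leaves this set. -/
def farSide (D : ℕ → Multigraph) (a b : ∀ n, (D n).V) (e : E3)
    (ω : (GammaD D a b).E → Bool) : (GammaD D a b).V → Prop
  | Sum.inl v => BelowV e v
  | Sum.inr ⟨e', x⟩ =>
      if h : e' = e then (D (levelE e)).OpenConn (fun d => ω ⟨e, d⟩) (h ▸ x.1) (b (levelE e))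
      else BelowE e e'

lemma farSide_embedV_of_ne {e e' : E3} (hne : e ≠ e') (ω : (GammaD D a b).E → Bool)
    (v : (D (levelE e')).V) :
    farSide D a b e ω (embedV D a b e' v) ↔ BelowE e e' := by
  unfold embedV
  split_ifs
  · exact belowV_parentV_iff hne
  · exact Iff.rfl
  · exact iff_of_eq (dif_neg (Ne.symm hne))

lemma farSide_embedV_self {e : E3} {ω : (GammaD D a b).E → Bool} (hcl : ¬ CopyConn D a b ω e)
    (v : (D (levelE e)).V) :
    farSide D a b e ω (embedV D a b e v) ↔
      (D (levelE e)).OpenConn (fun d => ω ⟨e, d⟩) v (b (levelE e)) := by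
  unfold embedV
  split_ifs with ha hb
  · subst ha
    exact iff_of_false (not_belowV_parentV_self e) hcl
  · subst hb
    exact iff_of_true (BelowE.refl e) Relation.ReflTransGen.refl
  · exact iff_of_eq (dif_pos rfl)

lemma farSide_iff_of_openConn {e : E3} {ω : (GammaD D a b).E → Bool}
    (hcl : ¬ CopyConn D a b ω e) {x y : (GammaD D a b).V} (h : (GammaD D a b).OpenConn ω x y) :
    farSide D a b e ω x ↔ farSide D a b e ω y := by
  induction h with
  | refl => rfl
  | tail _ hstep ih =>
    refine ih.trans ?_
    obtain ⟨⟨e', d⟩, hopen, hends⟩ := hstep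
    have key : farSide D a b e ω (embedV D a b e' ((D (levelE e')).ends d).1) ↔
        farSide D a b e ω (embedV D a b e' ((D (levelE e')).ends d).2) := by
      by_cases he : e' = e
      · subst he
        rw [farSide_embedV_self hcl, farSide_embedV_self hcl]
        exact ⟨.head ⟨d, hopen, .inr rfl⟩, .head ⟨d, hopen, .inl rfl⟩⟩
      · rw [farSide_embedV_of_ne (Ne.symm he), farSide_embedV_of_ne (Ne.symm he)]
    rcases hends with h | h <;> simp only [Prod.ext_iff] at h <;> rw [← h.1, ← h.2]
    exacts [key, key.symm]

lemma copyConn_of_openConn {e : E3} {ω : (GammaD D a b).E → Bool} {x y : (GammaD D a b).V}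
    (h : (GammaD D a b).OpenConn ω x y) (hx : ¬ farSide D a b e ω x)
    (hy : farSide D a b e ω y) : CopyConn D a b ω e :=
  by_contra fun hcl => hx ((farSide_iff_of_openConn hcl h).mpr hy)

def anchorV : (GammaD D a b).V → V3
  | Sum.inl v => v
  | Sum.inr z => some z.1

lemma farSide.levelE_le {e : E3} {ω : (GammaD D a b).E → Bool} :
    ∀ {z : (GammaD D a b).V}, farSide D a b e ω z → levelE e ≤ levelV (anchorV z)
  | Sum.inl _, h => BelowV.levelE_le h
  | Sum.inr ⟨e', _⟩, h => by
    by_cases he : e' = e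
    · subst he; exact le_rfl
    · exact BelowE.levelE_le ((dif_neg he).mp h)

lemma farSide_of_belowV {e : E3} {ω : (GammaD D a b).E → Bool} :
    ∀ {z : (GammaD D a b).V}, BelowV e (anchorV z) → levelE e < levelV (anchorV z) →
      farSide D a b e ω z
  | Sum.inl _, h, _ => h
  | Sum.inr ⟨e', _⟩, h, hlt => by
    have he : e' ≠ e := by rintro rfl; exact lt_irrefl _ hlt
    exact (dif_neg he).mpr h

lemma finite_setOf_levelV_anchorV_le [∀ n, Fintype (D n).V] (N : ℕ) :
    {z : (GammaD D a b).V | levelV (anchorV z) ≤ N}.Finite := by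
  refine (((finite_setOf_levelV_le N).image Sum.inl).union
    ((finite_setOf_levelE_le N).biUnion
      (t := fun e => Set.range fun x => (Sum.inr ⟨e, x⟩ : (GammaD D a b).V))
      fun e _ => ?_)).subset ?_
  · have : Finite (interiorV (D (levelE e)) (a (levelE e)) (b (levelE e))) := Subtype.finite
    exact Set.finite_range _
  · rintro (v | ⟨e, x⟩) hz
    · exact Or.inl ⟨v, hz, rfl⟩
    · exact Or.inr (Set.mem_biUnion hz ⟨x, rfl⟩)

lemma exists_mem_cluster_lt_levelV [∀ n, Fintype (D n).V] {ω : (GammaD D a b).E → Bool}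
    {v : (GammaD D a b).V} (h : ((GammaD D a b).cluster ω v).Infinite) (N : ℕ) :
    ∃ z ∈ (GammaD D a b).cluster ω v, N < levelV (anchorV z) := by
  by_contra! hcon
  exact h ((finite_setOf_levelV_anchorV_le N).subset hcon)

end GammaD

section Descent

variable (D : ℕ → Multigraph) (a b : ∀ n, (D n).V)

/-- Some downward path of `L` tree edges starting at the far endpoint of `e` has all its copies
connecting their marked vertices. -/
def openDescent : E3 → ℕ → Set ((GammaD D a b).E → Bool)
  | _, 0 => univ
  | e, L + 1 => {ω | ∃ j : Fin 2,
      CopyConn D a b ω (childE e j) ∧ ω ∈ openDescent (childE e j) L}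

def descentBranch (e : E3) (j : Fin 2) (L : ℕ) : Set ((GammaD D a b).E → Bool) :=
  {ω | CopyConn D a b ω (childE e j)} ∩ openDescent D a b (childE e j) L

variable {D a b}

lemma openDescent_succ (e : E3) (L : ℕ) :
    openDescent D a b e (L + 1) = descentBranch D a b e 0 L ∪ descentBranch D a b e 1 L := by
  ext ω
  simp [openDescent, descentBranch, Fin.exists_fin_two]

lemma openDescent_succ_subset (e : E3) (L : ℕ) :
    openDescent D a b e (L + 1) ⊆ openDescent D a b e L := by
  induction L generalizing e with
  | zero => exact fun _ _ => trivial
  | succ L ih => exact fun ω ⟨j, hj, hω⟩ => ⟨j, hj, ih _ hω⟩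

lemma openDescent_antitone (e : E3) : Antitone (openDescent D a b e) :=
  antitone_nat_of_succ_le (openDescent_succ_subset e)

variable (D a b) [∀ n, Fintype (D n).E]

noncomputable def copyEdges (e : E3) : Finset (GammaD D a b).E :=
  Finset.univ.map ⟨Sigma.mk e, sigma_mk_injective⟩

noncomputable def descentSupport : E3 → ℕ → Finset (GammaD D a b).E
  | _, 0 => ∅
  | e, L + 1 => Finset.univ.biUnion fun j : Fin 2 =>
      copyEdges D a b (childE e j) ∪ descentSupport (childE e j) L

noncomputable def branchSupport (e : E3) (j : Fin 2) (L : ℕ) : Finset (GammaD D a b).E :=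
  copyEdges D a b (childE e j) ∪ descentSupport D a b (childE e j) L

variable {D a b}

lemma mem_copyEdges {e : E3} {ed : (GammaD D a b).E} (h : ed ∈ copyEdges D a b e) :
    ed.1 = e := by
  simp only [copyEdges, Finset.mem_map, Finset.mem_univ, true_and] at h
  obtain ⟨d, rfl⟩ := h
  rfl

lemma mem_descentSupport {e : E3} {L : ℕ} {ed : (GammaD D a b).E}
    (h : ed ∈ descentSupport D a b e L) : BelowE e ed.1 ∧ levelE e < levelE ed.1 := by
  induction L generalizing e with
  | zero => simp [descentSupport] at h
  | succ L ih =>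
    obtain ⟨j, -, hj⟩ := Finset.mem_biUnion.mp h
    rcases Finset.mem_union.mp hj with hcopy | hdesc
    · rw [mem_copyEdges hcopy, levelE_childE]
      exact ⟨belowE_childE e j, Nat.lt_succ_self _⟩
    · obtain ⟨hbelow, hlt⟩ := ih hdesc
      rw [levelE_childE] at hlt
      exact ⟨(belowE_childE e j).trans hbelow, by omega⟩

lemma BelowE.of_mem_branchSupport {e : E3} {j : Fin 2} {L : ℕ} {ed : (GammaD D a b).E}
    (h : ed ∈ branchSupport D a b e j L) : BelowE (childE e j) ed.1 :=
  (Finset.mem_union.mp h).elim (fun hcopy => mem_copyEdges hcopy ▸ BelowE.refl _)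
    fun hdesc => (mem_descentSupport hdesc).1

lemma disjoint_copyEdges_descentSupport (e : E3) (L : ℕ) :
    Disjoint (copyEdges D a b e) (descentSupport D a b e L) :=
  Finset.disjoint_left.mpr fun _ hcopy hdesc =>
    (mem_descentSupport hdesc).2.ne (congrArg levelE (mem_copyEdges hcopy)).symm

lemma disjoint_branchSupport (e : E3) (L : ℕ) :
    Disjoint (branchSupport D a b e 0 L) (branchSupport D a b e 1 L) :=
  Finset.disjoint_left.mpr fun _ h₀ h₁ =>
    not_belowE_childE_zero_of_one (.of_mem_branchSupport h₀) (.of_mem_branchSupport h₁)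

lemma copyConn_dependsOn (e : E3) :
    DependsOn (· ∈ {ω | CopyConn D a b ω e}) (copyEdges D a b e : Set (GammaD D a b).E) :=
  fun ω ω' h => by
    have : (fun d => ω ⟨e, d⟩) = fun d => ω' ⟨e, d⟩ :=
      funext fun d => h ⟨e, d⟩ (by simp [copyEdges])
    simp only [Set.mem_ofPred_eq, CopyConn, this]

lemma openDescent_dependsOn (e : E3) (L : ℕ) :
    DependsOn (· ∈ openDescent D a b e L) (descentSupport D a b e L : Set (GammaD D a b).E) := by
  induction L generalizing e with
  | zero => exact fun _ _ _ => by simp [openDescent]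
  | succ L ih =>
    intro ω ω' h
    have hbranch : ∀ j : Fin 2,
        (ω ∈ descentBranch D a b e j L) = (ω' ∈ descentBranch D a b e j L) :=
      fun j => (copyConn_dependsOn _).mem_inter (ih _) fun i hi =>
        h i (Finset.mem_biUnion.mpr ⟨j, Finset.mem_univ _, by simpa using hi⟩)
    exact propext (exists_congr fun j => iff_of_eq (hbranch j))

lemma descentBranch_dependsOn (e : E3) (j : Fin 2) (L : ℕ) :
    DependsOn (· ∈ descentBranch D a b e j L)
      (branchSupport D a b e j L : Set (GammaD D a b).E) := by
  rw [branchSupport, Finset.coe_union]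
  exact (copyConn_dependsOn _).mem_inter (openDescent_dependsOn _ L)

end Descent

section Estimates

variable {D : ℕ → Multigraph} {a b : ∀ n, (D n).V} [∀ n, Fintype (D n).E]
  {p : ℝ} {ν : Measure ((GammaD D a b).E → Bool)}

lemma measureReal_openDescent_succ (hν : IsBernoulli p ν) (hp : p ∈ Icc (0:ℝ) 1)
    (e : E3) (L : ℕ) :
    ν.real (openDescent D a b e (L + 1)) =
      ν.real (descentBranch D a b e 0 L) + ν.real (descentBranch D a b e 1 L) -
        ν.real (descentBranch D a b e 0 L) * ν.real (descentBranch D a b e 1 L) := by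
  have := hν.1
  rw [← hν.measureReal_inter hp (disjoint_branchSupport e L) (descentBranch_dependsOn e 0 L)
    (descentBranch_dependsOn e 1 L), ← measureReal_union_add_inter
    (descentBranch_dependsOn e 1 L).measurableSet, openDescent_succ, add_sub_cancel_right]

variable [∀ n, DecidableEq (D n).E]

lemma measureReal_copyConn (hν : IsBernoulli p ν) (hp : p ∈ Icc (0:ℝ) 1) (e : E3) :
    ν.real {ω | CopyConn D a b ω e} = (D (levelE e)).hprob (a (levelE e)) (b (levelE e)) p :=
  (congrArg ENNReal.toReal (hν.measure_comp_mem_s9 hp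
    (sigma_mk_injective (β := fun e => (D (levelE e)).E) (i := e))
    {η | (D (levelE e)).OpenConn η (a (levelE e)) (b (levelE e))})).trans
    (ENNReal.toReal_ofReal (bprob_nonneg hp _))

lemma measureReal_descentBranch (hν : IsBernoulli p ν) (hp : p ∈ Icc (0:ℝ) 1)
    (e : E3) (j : Fin 2) (L : ℕ) :
    ν.real (descentBranch D a b e j L) =
      (D (levelE (childE e j))).hprob (a (levelE (childE e j))) (b (levelE (childE e j))) p *
        ν.real (openDescent D a b (childE e j) L) := by
  rw [descentBranch, hν.measureReal_inter hp (disjoint_copyEdges_descentSupport _ L)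
    (copyConn_dependsOn _) (openDescent_dependsOn _ L), measureReal_copyConn hν hp]

end Estimates

section Clusters

variable {D : ℕ → Multigraph} {a b : ∀ n, (D n).V} {ω : (GammaD D a b).E → Bool}

lemma mem_openDescent_truncE {e : E3} {n L : ℕ} (hlen : n + L ≤ e.2.length)
    (hconn : ∀ m, n < m → m ≤ n + L → CopyConn D a b ω (truncE e m)) :
    ω ∈ openDescent D a b (truncE e n) L := by
  induction L generalizing n with
  | zero => trivial
  | succ L ih =>
    have hn : n < e.2.length := by omega
    refine ⟨e.2[n], ?_, ?_⟩ <;> rw [childE_truncE hn]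
    · exact hconn (n + 1) (by omega) (by omega)
    · exact ih (by omega) fun m h₁ h₂ => hconn m (by omega) (by omega)

/-- An infinite cluster reaches arbitrarily deep anchors, and every tree edge between its starting
level and such an anchor is crossed (`copyConn_of_openConn`). Since there are finitely many tree
edges at a fixed level, one of them starts arbitrarily long open descents. -/
lemma exists_forall_mem_openDescent [∀ n, Fintype (D n).V] {v : (GammaD D a b).V}
    (hv : ((GammaD D a b).cluster ω v).Infinite) (M : ℕ) :
    ∃ e, M ≤ levelE e ∧ ∀ L, ω ∈ openDescent D a b e L := by
  set n := max M (levelV (anchorV v))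
  have hdeep : ∀ L, ∃ e ∈ {e : E3 | levelE e = n + 1}, ω ∈ openDescent D a b e L := by
    intro L
    obtain ⟨z, hz, hlev⟩ := exists_mem_cluster_lt_levelV hv (n + L + 1)
    obtain ⟨e', he'⟩ : ∃ e', anchorV z = some e' :=
      Option.ne_none_iff_exists'.mp fun h => by simp [h, levelV] at hlev
    rw [he'] at hlev
    change n + L + 1 < e'.2.length + 1 at hlev
    refine ⟨truncE e' n, levelE_truncE (by omega),
      mem_openDescent_truncE (by omega) fun m hm _ => ?_⟩
    refine copyConn_of_openConn hz (fun hfar => ?_) (farSide_of_belowV ?_ ?_)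
    · have := hfar.levelE_le
      rw [levelE_truncE (by omega)] at this
      omega
    · rw [he']
      exact belowE_truncE e' m
    · rw [he', levelE_truncE (by omega)]
      change m + 1 < e'.2.length + 1
      omega
  obtain ⟨e, he, hmem⟩ := (finite_setOf_levelE_le (n + 1)).subset (fun _ he => he.le)
    |>.exists_forall_mem_of_antitone openDescent_antitone hdeep
  exact ⟨e, by rw [show levelE e = n + 1 from he]; omega, hmem⟩

lemma exists_openConn_of_mem_openDescent (hab : ∀ n, a n ≠ b n) {e : E3} {L : ℕ}
    (h : ω ∈ openDescent D a b e L) :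
    ∃ e', levelE e' = levelE e + L ∧
      (GammaD D a b).OpenConn ω (Sum.inl (some e)) (Sum.inl (some e')) := by
  induction L generalizing e with
  | zero => exact ⟨e, rfl, .refl⟩
  | succ L ih =>
    obtain ⟨j, hcopy, hdesc⟩ := h
    obtain ⟨e', hlev, hconn⟩ := ih hdesc
    have hstep := hcopy.openConn hab
    rw [parentV_childE] at hstep
    exact ⟨e', by rw [hlev, levelE_childE]; ring, hstep.trans hconn⟩

lemma infinite_cluster_of_forall_mem_openDescent (hab : ∀ n, a n ≠ b n) {e : E3}
    (h : ∀ L, ω ∈ openDescent D a b e L) :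
    ((GammaD D a b).cluster ω (Sum.inl (some e))).Infinite := by
  intro hfin
  obtain ⟨N, hN⟩ := (hfin.image fun z => levelV (anchorV z)).bddAbove
  obtain ⟨e', hlev, hconn⟩ := exists_openConn_of_mem_openDescent hab (h (N + 1))
  have : levelE e' ≤ N := hN ⟨_, hconn, rfl⟩
  omega

end Clusters

section Bounds

variable {D : ℕ → Multigraph} {a b : ∀ n, (D n).V}
  [∀ n, Fintype (D n).E] [∀ n, DecidableEq (D n).E]
  {p q : ℝ} {ν : Measure ((GammaD D a b).E → Bool)} {M : ℕ}

lemma measureReal_openDescent_le (hν : IsBernoulli p ν) (hp : p ∈ Icc (0:ℝ) 1)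
    (hM : ∀ n, M ≤ n → (D n).hprob (a n) (b n) p ≤ q) {e : E3} (he : M ≤ levelE e)
    (L : ℕ) : ν.real (openDescent D a b e L) ≤ (2 * q) ^ L := by
  have := hν.1
  have hq : 0 ≤ q := (bprob_nonneg hp _).trans (hM M le_rfl)
  induction L generalizing e with
  | zero => simp [openDescent]
  | succ L ih =>
    have hbranch : ∀ j, ν.real (descentBranch D a b e j L) ≤ q * (2 * q) ^ L := fun j => by
      have hj : M ≤ levelE (childE e j) := by rw [levelE_childE]; omega
      rw [measureReal_descentBranch hν hp]
      exact mul_le_mul (hM _ hj) (ih hj) measureReal_nonneg hq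
    have hprod : 0 ≤ ν.real (descentBranch D a b e 0 L) * ν.real (descentBranch D a b e 1 L) :=
      mul_nonneg measureReal_nonneg measureReal_nonneg
    rw [measureReal_openDescent_succ hν hp, pow_succ]
    linarith [hbranch 0, hbranch 1]

/-- `(2q - 1) / q²` is the positive fixed point of the recursion `y ↦ 1 - (1 - q y)²`. -/
lemma le_measureReal_openDescent (hν : IsBernoulli p ν) (hp : p ∈ Icc (0:ℝ) 1)
    (hq : 1 / 2 < q) (hM : ∀ n, M ≤ n → q ≤ (D n).hprob (a n) (b n) p) {e : E3}
    (he : M ≤ levelE e) (L : ℕ) :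
    (2 * q - 1) / q ^ 2 ≤ ν.real (openDescent D a b e L) := by
  have := hν.1
  set δ := (2 * q - 1) / q ^ 2
  have hδ : q ^ 2 * δ = 2 * q - 1 := mul_div_cancel₀ _ (by positivity)
  have hδ0 : 0 < δ := div_pos (by linarith) (by positivity)
  induction L generalizing e with
  | zero =>
    simp only [openDescent, probReal_univ]
    nlinarith [sq_nonneg (q - 1)]
  | succ L ih =>
    have hbranch : ∀ j, q * δ ≤ ν.real (descentBranch D a b e j L) := fun j => by
      have hj : M ≤ levelE (childE e j) := by rw [levelE_childE]; omega
      rw [measureReal_descentBranch hν hp]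
      exact mul_le_mul (hM _ hj) (ih hj) hδ0.le (by linarith [hM _ hj])
    have hprod := mul_le_mul (sub_le_sub_left (hbranch 0) 1) (sub_le_sub_left (hbranch 1) 1)
      (sub_nonneg.2 measureReal_le_one) (sub_nonneg.2 ((hbranch 0).trans measureReal_le_one))
    have hfix : (1 - q * δ) * (1 - q * δ) = 1 - δ := by linear_combination δ * hδ
    rw [measureReal_openDescent_succ hν hp]
    linarith

theorem measure_infinite_cluster_eq_zero [∀ n, Fintype (D n).V] (hν : IsBernoulli p ν)
    (hp : p ∈ Icc (0:ℝ) 1) (hq : q < 1 / 2)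
    (hM : ∀ n, M ≤ n → (D n).hprob (a n) (b n) p ≤ q) :
    ν {ω | ∃ v, ((GammaD D a b).cluster ω v).Infinite} = 0 := by
  have := hν.1
  have hq0 : 0 ≤ q := (bprob_nonneg hp _).trans (hM M le_rfl)
  refine measure_mono_null
    (t := ⋃ e : E3, {ω | M ≤ levelE e ∧ ∀ L, ω ∈ openDescent D a b e L})
    (fun ω ⟨v, hv⟩ => Set.mem_iUnion.2 (exists_forall_mem_openDescent hv M))
    (measure_iUnion_null fun e => ?_)
  by_cases he : M ≤ levelE e
  · refine measure_mono_null (fun ω hω => Set.mem_iInter.2 hω.2) ?_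
    rw [← measureReal_eq_zero_iff]
    refine le_antisymm (ge_of_tendsto'
      (tendsto_pow_atTop_nhds_zero_of_lt_one (r := 2 * q) (by linarith) (by linarith)) fun L => ?_)
      measureReal_nonneg
    exact (measureReal_mono (Set.iInter_subset _ L)).trans
      (measureReal_openDescent_le hν hp hM he L)
  · simp [he]

theorem measure_infinite_cluster_pos (hab : ∀ n, a n ≠ b n) (hν : IsBernoulli p ν)
    (hp : p ∈ Icc (0:ℝ) 1) (hq : 1 / 2 < q)
    (hM : ∀ n, M ≤ n → q ≤ (D n).hprob (a n) (b n) p) :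
    0 < ν {ω | ∃ v, ((GammaD D a b).cluster ω v).Infinite} := by
  have := hν.1
  let e₀ : E3 := (0, List.replicate M 0)
  have he₀ : M ≤ levelE e₀ := by simp [e₀, levelE]
  calc 0 < ENNReal.ofReal ((2 * q - 1) / q ^ 2) :=
        ENNReal.ofReal_pos.2 (div_pos (by linarith) (by positivity))
    _ ≤ ν (⋂ L, openDescent D a b e₀ L) := by
        rw [(openDescent_antitone e₀).measure_iInter
          (fun L => (openDescent_dependsOn e₀ L).measurableSet.nullMeasurableSet)
          ⟨0, measure_ne_top _ _⟩]
        exact le_iInf fun L => (ENNReal.ofReal_le_ofReal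
          (le_measureReal_openDescent hν hp hq hM he₀ L)).trans_eq ofReal_measureReal
    _ ≤ ν {ω | ∃ v, ((GammaD D a b).cluster ω v).Infinite} := measure_mono fun ω hω =>
        ⟨_, infinite_cluster_of_forall_mem_openDescent hab (Set.mem_iInter.1 hω)⟩

end Bounds

theorem treelike_bond_critical_bounds_general
    (D : ℕ → Multigraph) (a b : ∀ n, (D n).V) (hab : ∀ n, a n ≠ b n)
    [∀ n, Fintype (D n).E] [∀ n, DecidableEq (D n).E] [∀ n, Fintype (D n).V]
    (νE : ℝ → Measure ((GammaD D a b).E → Bool))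
    (hν : ∀ p ∈ Set.Icc (0:ℝ) 1, IsBernoulli p (νE p))
    (pc : ℝ) (hpc : IsBondCritical (GammaD D a b) νE pc)
    (p : ℝ) (hp : p ∈ Set.Icc (0:ℝ) 1) :
    (Filter.limsup (fun n => (D n).hprob (a n) (b n) p) Filter.atTop < 1/2 → p ≤ pc) ∧
    (1/2 < Filter.liminf (fun n => (D n).hprob (a n) (b n) p) Filter.atTop → pc ≤ p) := by
  have hbdd_above : IsBoundedUnder (· ≤ ·) atTop fun n => (D n).hprob (a n) (b n) p :=
    isBoundedUnder_of ⟨1, fun _ => bprob_le_one hp _⟩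
  have hbdd_below : IsBoundedUnder (· ≥ ·) atTop fun n => (D n).hprob (a n) (b n) p :=
    isBoundedUnder_of ⟨0, fun _ => bprob_nonneg hp _⟩
  constructor
  · intro hlim
    obtain ⟨q, hlq, hq⟩ := exists_between hlim
    obtain ⟨M, hM⟩ := eventually_atTop.1 (eventually_lt_of_limsup_lt hlq hbdd_above)
    refine not_lt.1 fun hpc_lt => ((hpc.2 p hp).2 hpc_lt).ne' ?_
    exact measure_infinite_cluster_eq_zero (hν p hp) hp hq fun n hn => (hM n hn).le
  · intro hlim
    obtain ⟨q, hq, hql⟩ := exists_between hlim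
    obtain ⟨M, hM⟩ := eventually_atTop.1 (eventually_lt_of_lt_liminf hql hbdd_below)
    refine not_lt.1 fun hp_lt => ?_
    exact (measure_infinite_cluster_pos hab (hν p hp) hp hq fun n hn => (hM n hn).le).ne'
      ((hpc.2 p hp).1 hp_lt)

/-- Lemma (bond percolation on tree-like graphs): if `limsup h^{D_n}(p) < 1/2` then
`p ≤ p_c^{Γ_D}`, and if `liminf h^{D_n}(p) > 1/2` then `p ≥ p_c^{Γ_D}`. -/
theorem treelike_bond_critical_bounds
    (D : ℕ → Multigraph) (a b : ∀ n, (D n).V) (hab : ∀ n, a n ≠ b n)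
    [∀ n, Fintype (D n).E] [∀ n, DecidableEq (D n).E] [∀ n, Fintype (D n).V]
    (hconn : ∀ n, ∀ x y : (D n).V, Relation.ReflTransGen ((D n).Adj) x y)
    (νE : ℝ → Measure ((GammaD D a b).E → Bool))
    (hν : ∀ p ∈ Set.Icc (0:ℝ) 1, IsBernoulli p (νE p))
    (pc : ℝ) (hpc : IsBondCritical (GammaD D a b) νE pc)
    (p : ℝ) (hp : p ∈ Set.Icc (0:ℝ) 1) :
    (Filter.limsup (fun n => (D n).hprob (a n) (b n) p) Filter.atTop < 1/2 → p ≤ pc) ∧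
    (1/2 < Filter.liminf (fun n => (D n).hprob (a n) (b n) p) Filter.atTop → pc ≤ p) :=
  treelike_bond_critical_bounds_general D a b hab νE hν pc hpc p hp
end

section
/- For the complete bipartite graph D^k = K_{2,k+2} with marked vertices a, b (each adjacent only to z_1 and z_2), in the DaC model with p = 0 and r = 2/3, the pivotality probability f^{D^k}(0, 2/3) equals 16/27, which is strictly greater than 1/2. -/
open MeasureTheory Filter Set

attribute [local instance] Classical.propDecidable

/-- The complete bipartite graph `K_{2,k+2}`, with parts `{z₁, z₂}` (the vertices `0, 1`)
and `{a, b, v₁, …, v_k}` (the vertices `2, 3, 4, …, k+3`); `a = 2` and `b = 3`. -/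
abbrev Kgraph (k : ℕ) : Multigraph where
  V := Fin (k + 4)
  E := Fin 2 × Fin (k + 2)
  ends := fun e => (Fin.castLE (by omega) e.1, e.2.succ.succ)

/-! At `p = 0` every bond is closed, so each bond cluster is a single vertex and the DaC
colouring is the Bernoulli(`r`) site colouring itself. The event `E_{a,b}` then says that `b`
and at least one of the two neighbours `z₁, z₂` of `a` are black; by inclusion–exclusion its
probability is `r² + r² - r³ = r²(2 - r)`, which is `16/27` at `r = 2/3`. -/

namespace Multigraph

variable (G : Multigraph)

@[simp]
lemma openConn_const_false_iff {x y : G.V} : G.OpenConn (fun _ => false) x y ↔ x = y := by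
  refine ⟨fun h => ?_, fun h => h ▸ .refl⟩
  induction h with
  | refl => rfl
  | tail _ hstep _ => obtain ⟨e, he, _⟩ := hstep; cases he

@[simp]
lemma cluster_const_false (v : G.V) : G.cluster (fun _ => false) v = {v} := by
  ext w
  simp [cluster, eq_comm]

@[simp]
lemma minRep_const_false [Fintype G.V] [LinearOrder G.V] (v : G.V) :
    G.minRep (fun _ => false) v = v := by
  have h : G.minRep (fun _ => false) v ∈ (Set.toFinite (G.cluster (fun _ => false) v)).toFinset :=
    Finset.min'_mem _ _
  simpa using h

lemma BlackConn.target_black {ξ : G.V → Bool} {x y : G.V} (h : G.BlackConn ξ x y) :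
    ξ y = true := by
  obtain ⟨hx, hpath⟩ := h
  rcases hpath.cases_tail with rfl | ⟨_, _, _, hy⟩
  exacts [hx, hy]

lemma blackConn_of_adj {ξ : G.V → Bool} {x y : G.V} (hxy : G.Adj x y) (hx : ξ x = true)
    (hy : ξ y = true) : G.BlackConn ξ x y :=
  ⟨hx, .single ⟨hxy, hy⟩⟩

lemma mem_pivEvent_const_false_iff {a b : G.V} (ξ : G.V → Bool) :
    ((fun _ => false), ξ) ∈ G.PivEvent a b ↔
      a = b ∨ ∃ v, v ≠ a ∧ G.Adj a v ∧ G.BlackConn ξ v b := by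
  simp only [PivEvent, Set.mem_ofPred_eq, openConn_const_false_iff, cluster_const_false,
    Set.mem_singleton_iff, exists_eq_left]
  tauto

lemma dacProb_zero [Fintype G.E] [DecidableEq G.E] [Fintype G.V] [LinearOrder G.V] (r : ℝ)
    (A : Set ((G.E → Bool) × (G.V → Bool))) :
    G.dacProb 0 r A = ∑ κ : G.V → Bool,
      (∏ v, if κ v then r else 1 - r) * if ((fun _ => false), κ) ∈ A then 1 else 0 := by
  rw [dacProb, Finset.sum_eq_single_of_mem (fun _ => false) (Finset.mem_univ _)]
  · simp
  · intro η _ hη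
    obtain ⟨e, he⟩ : ∃ e, η e = true := by
      by_contra! h
      exact hη (funext fun e => by simpa using h e)
    refine Finset.sum_eq_zero fun κ _ => ?_
    rw [Finset.prod_eq_zero (Finset.mem_univ e) (by simp [he]), zero_mul, zero_mul]

end Multigraph

lemma sum_bernoulli_mul_prod_boole {V : Type*} [Fintype V] (r : ℝ) (s : Finset V) :
    ∑ κ : V → Bool, (∏ v, if κ v then r else 1 - r) * (∏ v ∈ s, if κ v then 1 else 0)
      = r ^ s.card := by
  have hsplit : ∀ κ : V → Bool,
      (∏ v, if κ v then r else 1 - r) * (∏ v ∈ s, if κ v then 1 else 0) =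
        ∏ v, (if κ v then r else 1 - r) * (if v ∈ s then (if κ v then 1 else 0) else 1) := by
    intro κ
    rw [Finset.prod_mul_distrib, Finset.prod_ite_mem, Finset.univ_inter]
  have hfactor : ∀ v : V,
      (∑ b : Bool, (if b then r else 1 - r) * if v ∈ s then (if b then 1 else 0) else 1) =
        if v ∈ s then r else 1 := by
    intro v
    by_cases hv : v ∈ s <;> simp [hv]
  simp_rw [hsplit]
  -- the summand factorises over the vertices, so the sum over colourings is a product of sums
  rw [← Fintype.prod_sum (fun (v : V) (b : Bool) =>
    (if b then r else 1 - r) * if v ∈ s then (if b then 1 else 0) else 1)]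
  rw [Fintype.prod_congr _ _ hfactor, Finset.prod_ite_mem, Finset.univ_inter, Finset.prod_const]

lemma boole_and_or_eq {V : Type*} [DecidableEq V] (κ : V → Bool) (a b c : V) :
    (if κ a = true ∧ (κ b = true ∨ κ c = true) then 1 else 0 : ℝ) =
      (∏ v ∈ {a, b}, if κ v then 1 else 0) +
        (∏ v ∈ {a, c}, if κ v then 1 else 0) -
        (∏ v ∈ {a, b, c}, if κ v then 1 else 0) := by
  simp only [Finset.prod_boole, Finset.forall_mem_insert, Finset.mem_singleton, forall_eq]
  cases κ a <;> cases κ b <;> cases κ c <;> norm_num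

lemma Kgraph_adj_two_iff (k : ℕ) (v : Fin (k + 4)) : (Kgraph k).Adj 2 v ↔ v = 0 ∨ v = 1 := by
  constructor
  · rintro ⟨⟨i, j⟩, he | he⟩ <;> simp only [Prod.mk.injEq, Fin.ext_iff] at he ⊢ <;>
      simp only [Fin.val_castLE, Fin.val_succ, Fin.coe_ofNat_eq_mod, Nat.zero_mod,
        Nat.mod_eq_of_lt (by omega : 1 < k + 4),
        Nat.mod_eq_of_lt (by omega : 2 < k + 4)] at he ⊢ <;>
      omega
  · rintro (rfl | rfl)
    exacts [⟨(0, 0), Or.inr rfl⟩, ⟨(1, 0), Or.inr rfl⟩]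

lemma Kgraph_adj_zero_three (k : ℕ) : (Kgraph k).Adj 0 3 := ⟨(0, 1), Or.inl rfl⟩

lemma Kgraph_adj_one_three (k : ℕ) : (Kgraph k).Adj 1 3 := ⟨(1, 1), Or.inl rfl⟩

lemma Kgraph_mem_pivEvent_const_false_iff (k : ℕ) (κ : (Kgraph k).V → Bool) :
    ((fun _ => false), κ) ∈ (Kgraph k).PivEvent 2 3 ↔
      κ 3 = true ∧ (κ 0 = true ∨ κ 1 = true) := by
  have h23 : (2 : Fin (k + 4)) ≠ 3 := by simp [Fin.ext_iff, Nat.mod_eq_of_lt]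
  rw [Multigraph.mem_pivEvent_const_false_iff, or_iff_right h23]
  simp only [Kgraph_adj_two_iff]
  constructor
  · rintro ⟨v, -, rfl | rfl, hv⟩
    exacts [⟨hv.target_black, Or.inl hv.1⟩, ⟨hv.target_black, Or.inr hv.1⟩]
  · rintro ⟨h3, h0 | h1⟩
    · exact ⟨0, by simp [Fin.ext_iff, Nat.mod_eq_of_lt], Or.inl rfl,
        Multigraph.blackConn_of_adj _ (Kgraph_adj_zero_three k) h0 h3⟩
    · exact ⟨1, by simp [Fin.ext_iff, Nat.mod_eq_of_lt], Or.inr rfl,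
        Multigraph.blackConn_of_adj _ (Kgraph_adj_one_three k) h1 h3⟩

lemma Kgraph_fprob_zero (k : ℕ) (r : ℝ) : (Kgraph k).fprob 2 3 0 r = r ^ 2 * (2 - r) := by
  have h30 : (3 : Fin (k + 4)) ≠ 0 := by simp [Fin.ext_iff, Nat.mod_eq_of_lt]
  have h31 : (3 : Fin (k + 4)) ≠ 1 := by simp [Fin.ext_iff, Nat.mod_eq_of_lt]
  have h01 : (0 : Fin (k + 4)) ≠ 1 := by simp
  have hboole : ∀ κ : (Kgraph k).V → Bool,
      (if ((fun _ => false), κ) ∈ (Kgraph k).PivEvent 2 3 then 1 else 0 : ℝ) =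
        (∏ v ∈ {3, 0}, if κ v then 1 else 0) +
          (∏ v ∈ {3, 1}, if κ v then 1 else 0) -
          (∏ v ∈ {3, 0, 1}, if κ v then 1 else 0) := fun κ => by
    rw [if_congr (Kgraph_mem_pivEvent_const_false_iff k κ) rfl rfl]
    exact boole_and_or_eq κ 3 0 1
  simp_rw [Multigraph.fprob, Multigraph.dacProb_zero, hboole, mul_sub, mul_add,
    Finset.sum_sub_distrib, Finset.sum_add_distrib, sum_bernoulli_mul_prod_boole]
  rw [Finset.card_pair h30, Finset.card_pair h31, Finset.card_insert_of_notMem (by simp [h30, h31]),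
    Finset.card_pair h01]
  ring

/-- In the DaC model on `K_{2,k+2}` with `p = 0` and `r = 2/3`, the pivotality
probability equals `16/27 > 1/2`. -/
theorem Kgraph_f_at_zero (k : ℕ) :
    (Kgraph k).fprob 2 3 0 (2/3) = 16/27 ∧ (1/2 : ℝ) < 16/27 := by
  rw [Kgraph_fprob_zero]
  norm_num
end
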